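/- For every r ≥ 0, the graph G obtained from the path P_5 by attaching r pendant edges to each of its two support vertices (family A_1) satisfies ρ_e^o(G) = m − 2, where m = 2r + 4 is the number of edges of G. -/
import Mathlib


/-- `e` is a common edge of `e₁` and `e₂` in `G`: `e` is an edge of `G` distinct from
`e₁, e₂` joining an endpoint of `e₁` to an endpoint of `e₂`. -/
def SimpleGraph.IsCommonEdge {V : Type*} (G : SimpleGraph V) (e e₁ e₂ : Sym2 V) : Prop :=
  e ∈ G.edgeSet ∧ e ≠ e₁ ∧ e ≠ e₂ ∧ ∃ a b, e = s(a, b) ∧ a ∈ e₁ ∧ b ∈ e₂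

/-- `D` is an edge open packing set of `G`. -/
def SimpleGraph.IsEOPSet {V : Type*} (G : SimpleGraph V) (D : Set (Sym2 V)) : Prop :=
  D ⊆ G.edgeSet ∧ ∀ e₁ ∈ D, ∀ e₂ ∈ D, e₁ ≠ e₂ → ∀ e, ¬ G.IsCommonEdge e e₁ e₂

/-- The edge open packing number `ρ_e^o(G)`. -/
noncomputable def SimpleGraph.eopNum {V : Type*} (G : SimpleGraph V) : ℕ :=
  sSup {n | ∃ D : Set (Sym2 V), G.IsEOPSet D ∧ D.ncard = n}

/-- `M` is an induced matching of `G`. -/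
def SimpleGraph.IsInducedMatching {V : Type*} (G : SimpleGraph V) (M : Set (Sym2 V)) : Prop :=
  M ⊆ G.edgeSet ∧ (∀ e₁ ∈ M, ∀ e₂ ∈ M, e₁ ≠ e₂ → ∀ v, ¬(v ∈ e₁ ∧ v ∈ e₂)) ∧
    (∀ e₁ ∈ M, ∀ e₂ ∈ M, e₁ ≠ e₂ → ∀ a b, a ∈ e₁ → b ∈ e₂ → ¬ G.Adj a b)

/-- The induced matching number of `G`. -/
noncomputable def SimpleGraph.imNum {V : Type*} (G : SimpleGraph V) : ℕ :=
  sSup {n | ∃ M : Set (Sym2 V), G.IsInducedMatching M ∧ M.ncard = n}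

namespace Stmt17Aux

def rel' (r x y : ℕ) : Prop :=
  (x < 4 ∧ y = x + 1) ∨ (x = 1 ∧ 5 ≤ y ∧ y ≤ r + 4) ∨ (x = 3 ∧ r + 5 ≤ y)

def A (r x y : ℕ) : Prop := x ≠ y ∧ (rel' r x y ∨ rel' r y x)

def pairP (a b c d : ℕ) : Prop := (a = c ∧ b = d) ∨ (a = d ∧ b = c)

def Gr (r : ℕ) : SimpleGraph (Fin (2 * r + 5)) :=
  SimpleGraph.fromRel (fun x y =>
      (x.val < 4 ∧ y.val = x.val + 1) ∨
      (x.val = 1 ∧ 5 ≤ y.val ∧ y.val ≤ r + 4) ∨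
      (x.val = 3 ∧ r + 5 ≤ y.val))

lemma adj_val {r : ℕ} {x y : Fin (2 * r + 5)} :
    (Gr r).Adj x y ↔ A r x.val y.val := by
  unfold Gr A rel'
  rw [SimpleGraph.fromRel_adj]
  simp [ne_eq, Fin.ext_iff]

lemma sym2_rep {α : Type*} (e : Sym2 α) : ∃ x y, e = s(x, y) := by
  induction e using Sym2.ind with | _ x y => exact ⟨x, y, rfl⟩

lemma edge_rep {r : ℕ} {e : Sym2 (Fin (2 * r + 5))} (he : e ∈ (Gr r).edgeSet) :
    ∃ x y : Fin (2 * r + 5), e = s(x, y) ∧ A r x.val y.val := by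
  obtain ⟨x, y, rfl⟩ := sym2_rep e
  exact ⟨x, y, rfl, adj_val.mp ((Gr r).mem_edgeSet.mp he)⟩

lemma npair_of_ne {n : ℕ} {x y u v : Fin n} (h : s(x, y) ≠ s(u, v)) :
    ¬ pairP x.val y.val u.val v.val := by
  intro hp
  apply h
  rw [Sym2.eq_iff]
  rcases hp with ⟨h1, h2⟩ | ⟨h1, h2⟩
  · exact Or.inl ⟨Fin.ext h1, Fin.ext h2⟩
  · exact Or.inr ⟨Fin.ext h1, Fin.ext h2⟩

lemma mem_or {n : ℕ} {a x y : Fin n} (h : a ∈ s(x, y)) :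
    a.val = x.val ∨ a.val = y.val := by
  rcases Sym2.mem_iff.mp h with h | h
  · exact Or.inl (congrArg Fin.val h)
  · exact Or.inr (congrArg Fin.val h)

/-- every edge has the form {support, other} with support ∈ {1,3} -/
lemma edge_form (r x y : ℕ) (h : A r x y) :
    ∃ s o : ℕ, pairP x y s o ∧
      ((s = 1 ∧ (o = 0 ∨ o = 2 ∨ (5 ≤ o ∧ o ≤ r + 4))) ∨
       (s = 3 ∧ (o = 2 ∨ o = 4 ∨ r + 5 ≤ o))) := by
  by_cases hx : x = 1 ∨ x = 3
  · refine ⟨x, y, Or.inl ⟨rfl, rfl⟩, ?_⟩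
    unfold A rel' at h
    omega
  · refine ⟨y, x, Or.inr ⟨rfl, rfl⟩, ?_⟩
    unfold A rel' at h
    omega

lemma core2 (r s1 o1 s2 o2 a b se oe : ℕ)
    (h1 : (s1 = 1 ∧ (o1 = 0 ∨ (5 ≤ o1 ∧ o1 ≤ r + 4))) ∨ (s1 = 3 ∧ (o1 = 4 ∨ r + 5 ≤ o1)))
    (h2 : (s2 = 1 ∧ (o2 = 0 ∨ (5 ≤ o2 ∧ o2 ≤ r + 4))) ∨ (s2 = 3 ∧ (o2 = 4 ∨ r + 5 ≤ o2)))
    (he : (se = 1 ∧ (oe = 0 ∨ oe = 2 ∨ (5 ≤ oe ∧ oe ≤ r + 4))) ∨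
          (se = 3 ∧ (oe = 2 ∨ oe = 4 ∨ r + 5 ≤ oe)))
    (pe : pairP a b se oe)
    (n1 : ¬ pairP a b s1 o1) (n2 : ¬ pairP a b s2 o2)
    (ha : a = s1 ∨ a = o1) (hb : b = s2 ∨ b = o2) : False := by
  unfold pairP at *
  omega

lemma strengthen (r x y s o : ℕ) (p : pairP x y s o)
    (m : ¬ pairP x y 1 2) (m' : ¬ pairP x y 2 3)
    (f : (s = 1 ∧ (o = 0 ∨ o = 2 ∨ (5 ≤ o ∧ o ≤ r + 4))) ∨
         (s = 3 ∧ (o = 2 ∨ o = 4 ∨ r + 5 ≤ o))) :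
    (s = 1 ∧ (o = 0 ∨ (5 ≤ o ∧ o ≤ r + 4))) ∨ (s = 3 ∧ (o = 4 ∨ r + 5 ≤ o)) := by
  unfold pairP at *
  omega

lemma memtrans (x y s o a : ℕ) (p : pairP x y s o) (ha : a = x ∨ a = y) :
    a = s ∨ a = o := by
  unfold pairP at p
  omega

lemma netrans (a b x y s o : ℕ) (p : pairP x y s o) (n : ¬ pairP a b x y) :
    ¬ pairP a b s o := by
  unfold pairP at *
  omega

lemma coreFinal (r x1 y1 x2 y2 a b : ℕ)
    (h1 : A r x1 y1) (m1 : ¬ pairP x1 y1 1 2) (m1' : ¬ pairP x1 y1 2 3)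
    (h2 : A r x2 y2) (m2 : ¬ pairP x2 y2 1 2) (m2' : ¬ pairP x2 y2 2 3)
    (he : A r a b)
    (n1 : ¬ pairP a b x1 y1) (n2 : ¬ pairP a b x2 y2)
    (ha : a = x1 ∨ a = y1) (hb : b = x2 ∨ b = y2) : False := by
  obtain ⟨s1, o1, p1, f1⟩ := edge_form r x1 y1 h1
  obtain ⟨s2, o2, p2, f2⟩ := edge_form r x2 y2 h2
  obtain ⟨se, oe, pe, fe⟩ := edge_form r a b he
  exact core2 r s1 o1 s2 o2 a b se oe
    (strengthen r x1 y1 s1 o1 p1 m1 m1' f1)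
    (strengthen r x2 y2 s2 o2 p2 m2 m2' f2)
    fe pe (netrans a b x1 y1 s1 o1 p1 n1) (netrans a b x2 y2 s2 o2 p2 n2)
    (memtrans x1 y1 s1 o1 a p1 ha) (memtrans x2 y2 s2 o2 b p2 hb)

end Stmt17Aux
namespace Stmt17Aux

/-- condition for non-middle edges (oriented) -/
def C0 (r x y : ℕ) : Prop :=
  (x = 0 ∧ y = 1) ∨ (x = 3 ∧ y = 4) ∨ (x = 1 ∧ 5 ≤ y ∧ y ≤ r + 4) ∨
    (x = 3 ∧ r + 5 ≤ y ∧ y ≤ 2 * r + 4)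

/-- condition for all edges (oriented) -/
def CE (r x y : ℕ) : Prop := C0 r x y ∨ (x = 1 ∧ y = 2) ∨ (x = 2 ∧ y = 3)

lemma CE_01 {r x y : ℕ} (h1 : x = 0) (h2 : y = 1) : CE r x y := Or.inl (Or.inl ⟨h1, h2⟩)
lemma CE_34 {r x y : ℕ} (h1 : x = 3) (h2 : y = 4) : CE r x y :=
  Or.inl (Or.inr (Or.inl ⟨h1, h2⟩))
lemma CE_1p {r x y : ℕ} (h1 : x = 1) (h2 : 5 ≤ y) (h3 : y ≤ r + 4) : CE r x y :=
  Or.inl (Or.inr (Or.inr (Or.inl ⟨h1, h2, h3⟩)))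
lemma CE_3p {r x y : ℕ} (h1 : x = 3) (h2 : r + 5 ≤ y) (h3 : y ≤ 2 * r + 4) : CE r x y :=
  Or.inl (Or.inr (Or.inr (Or.inr ⟨h1, h2, h3⟩)))
lemma CE_12 {r x y : ℕ} (h1 : x = 1) (h2 : y = 2) : CE r x y := Or.inr (Or.inl ⟨h1, h2⟩)
lemma CE_23 {r x y : ℕ} (h1 : x = 2) (h2 : y = 3) : CE r x y := Or.inr (Or.inr ⟨h1, h2⟩)

lemma A_iff (r x y : ℕ) (hx : x < 2 * r + 5) (hy : y < 2 * r + 5) :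
    A r x y ↔ CE r x y ∨ CE r y x := by
  constructor
  · rintro ⟨hne, h | h⟩ <;> rcases h with ⟨h1, h2⟩ | ⟨h1, h2, h3⟩ | ⟨h1, h2⟩
    · have hx4 : x = 0 ∨ x = 1 ∨ x = 2 ∨ x = 3 := by omega
      rcases hx4 with h0 | h0 | h0 | h0
      · exact Or.inl (CE_01 h0 (by omega))
      · exact Or.inl (CE_12 h0 (by omega))
      · exact Or.inl (CE_23 h0 (by omega))
      · exact Or.inl (CE_34 h0 (by omega))
    · exact Or.inl (CE_1p h1 h2 h3)
    · exact Or.inl (CE_3p h1 h2 (by omega))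
    · have hy4 : y = 0 ∨ y = 1 ∨ y = 2 ∨ y = 3 := by omega
      rcases hy4 with h0 | h0 | h0 | h0
      · exact Or.inr (CE_01 h0 (by omega))
      · exact Or.inr (CE_12 h0 (by omega))
      · exact Or.inr (CE_23 h0 (by omega))
      · exact Or.inr (CE_34 h0 (by omega))
    · exact Or.inr (CE_1p h1 h2 h3)
    · exact Or.inr (CE_3p h1 h2 (by omega))
  · unfold A rel' CE C0
    rintro (((⟨h1, h2⟩ | ⟨h1, h2⟩ | ⟨h1, h2, h3⟩ | ⟨h1, h2, h3⟩) | ⟨h1, h2⟩ | ⟨h1, h2⟩) |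
      ((⟨h1, h2⟩ | ⟨h1, h2⟩ | ⟨h1, h2, h3⟩ | ⟨h1, h2, h3⟩) | ⟨h1, h2⟩ | ⟨h1, h2⟩)) <;>
      exact ⟨by omega, by omega⟩

lemma edge_repCE {r : ℕ} {e : Sym2 (Fin (2 * r + 5))} (he : e ∈ (Gr r).edgeSet) :
    ∃ x y : Fin (2 * r + 5), e = s(x, y) ∧ CE r x.val y.val := by
  obtain ⟨x, y, rfl, hA⟩ := edge_rep he
  rcases (A_iff r x.val y.val x.isLt y.isLt).mp hA with h | h
  · exact ⟨x, y, rfl, h⟩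
  · exact ⟨y, x, Sym2.eq_swap.symm, h⟩

lemma CE_A (r x y : ℕ) (hx : x < 2 * r + 5) (hy : y < 2 * r + 5) (h : CE r x y) : A r x y :=
  (A_iff r x y hx hy).mpr (Or.inl h)

lemma mem_edgeSet_of_CE {r : ℕ} {x y : Fin (2 * r + 5)} (h : CE r x.val y.val) :
    s(x, y) ∈ (Gr r).edgeSet :=
  (Gr r).mem_edgeSet.mpr (adj_val.mpr (CE_A r x.val y.val x.isLt y.isLt h))

def m12 (r : ℕ) : Sym2 (Fin (2 * r + 5)) := s(⟨1, by omega⟩, ⟨2, by omega⟩)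
def m23 (r : ℕ) : Sym2 (Fin (2 * r + 5)) := s(⟨2, by omega⟩, ⟨3, by omega⟩)

def φ₀ (r : ℕ) (k : Fin (2 * r + 2)) : Sym2 (Fin (2 * r + 5)) :=
  if k.val = 0 then s(⟨0, by omega⟩, ⟨1, by omega⟩)
  else if k.val = 1 then s(⟨3, by omega⟩, ⟨4, by omega⟩)
  else if k.val ≤ r + 1 then s(⟨1, by omega⟩, ⟨k.val + 3, by have := k.isLt; omega⟩)
  else s(⟨3, by omega⟩, ⟨k.val + 3, by have := k.isLt; omega⟩)

def φ₁ (r : ℕ) (k : Fin (r + 2)) : Sym2 (Fin (2 * r + 5)) :=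
  if k.val = 0 then s(⟨0, by omega⟩, ⟨1, by omega⟩)
  else if k.val = 1 then s(⟨1, by omega⟩, ⟨2, by omega⟩)
  else s(⟨1, by omega⟩, ⟨k.val + 3, by have := k.isLt; omega⟩)

def φ₃ (r : ℕ) (k : Fin (r + 2)) : Sym2 (Fin (2 * r + 5)) :=
  if k.val = 0 then s(⟨3, by omega⟩, ⟨4, by omega⟩)
  else if k.val = 1 then s(⟨2, by omega⟩, ⟨3, by omega⟩)
  else s(⟨3, by omega⟩, ⟨k.val + r + 3, by have := k.isLt; omega⟩)

def ψ (r : ℕ) (k : Fin (2 * r + 4)) : Sym2 (Fin (2 * r + 5)) :=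
  if k.val = 0 then s(⟨0, by omega⟩, ⟨1, by omega⟩)
  else if k.val = 1 then s(⟨1, by omega⟩, ⟨2, by omega⟩)
  else if k.val = 2 then s(⟨2, by omega⟩, ⟨3, by omega⟩)
  else if k.val = 3 then s(⟨3, by omega⟩, ⟨4, by omega⟩)
  else if k.val ≤ r + 3 then s(⟨1, by omega⟩, ⟨k.val + 1, by have := k.isLt; omega⟩)
  else s(⟨3, by omega⟩, ⟨k.val + 1, by have := k.isLt; omega⟩)

-- evaluation lemmas
lemma φ₀_eval0 (r : ℕ) (k : Fin (2 * r + 2)) (h : k.val = 0) :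
    φ₀ r k = s(⟨0, by omega⟩, ⟨1, by omega⟩) := by unfold φ₀; rw [if_pos h]
lemma φ₀_eval1 (r : ℕ) (k : Fin (2 * r + 2)) (h : k.val = 1) :
    φ₀ r k = s(⟨3, by omega⟩, ⟨4, by omega⟩) := by
  unfold φ₀; rw [if_neg (by omega), if_pos h]
lemma φ₀_evalp1 (r : ℕ) (k : Fin (2 * r + 2)) (h2 : 2 ≤ k.val) (h3 : k.val ≤ r + 1) :
    φ₀ r k = s(⟨1, by omega⟩, ⟨k.val + 3, by have := k.isLt; omega⟩) := by
  unfold φ₀; rw [if_neg (by omega), if_neg (by omega), if_pos h3]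
lemma φ₀_evalp3 (r : ℕ) (k : Fin (2 * r + 2)) (h2 : r + 2 ≤ k.val) :
    φ₀ r k = s(⟨3, by omega⟩, ⟨k.val + 3, by have := k.isLt; omega⟩) := by
  unfold φ₀; rw [if_neg (by omega), if_neg (by omega), if_neg (by omega)]

lemma φ₁_eval0 (r : ℕ) (k : Fin (r + 2)) (h : k.val = 0) :
    φ₁ r k = s(⟨0, by omega⟩, ⟨1, by omega⟩) := by unfold φ₁; rw [if_pos h]
lemma φ₁_eval1 (r : ℕ) (k : Fin (r + 2)) (h : k.val = 1) :
    φ₁ r k = s(⟨1, by omega⟩, ⟨2, by omega⟩) := by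
  unfold φ₁; rw [if_neg (by omega), if_pos h]
lemma φ₁_evalp (r : ℕ) (k : Fin (r + 2)) (h2 : 2 ≤ k.val) :
    φ₁ r k = s(⟨1, by omega⟩, ⟨k.val + 3, by have := k.isLt; omega⟩) := by
  unfold φ₁; rw [if_neg (by omega), if_neg (by omega)]

lemma φ₃_eval0 (r : ℕ) (k : Fin (r + 2)) (h : k.val = 0) :
    φ₃ r k = s(⟨3, by omega⟩, ⟨4, by omega⟩) := by unfold φ₃; rw [if_pos h]
lemma φ₃_eval1 (r : ℕ) (k : Fin (r + 2)) (h : k.val = 1) :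
    φ₃ r k = s(⟨2, by omega⟩, ⟨3, by omega⟩) := by
  unfold φ₃; rw [if_neg (by omega), if_pos h]
lemma φ₃_evalp (r : ℕ) (k : Fin (r + 2)) (h2 : 2 ≤ k.val) :
    φ₃ r k = s(⟨3, by omega⟩, ⟨k.val + r + 3, by have := k.isLt; omega⟩) := by
  unfold φ₃; rw [if_neg (by omega), if_neg (by omega)]

lemma ψ_eval0 (r : ℕ) (k : Fin (2 * r + 4)) (h : k.val = 0) :
    ψ r k = s(⟨0, by omega⟩, ⟨1, by omega⟩) := by unfold ψ; rw [if_pos h]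
lemma ψ_eval1 (r : ℕ) (k : Fin (2 * r + 4)) (h : k.val = 1) :
    ψ r k = s(⟨1, by omega⟩, ⟨2, by omega⟩) := by
  unfold ψ; rw [if_neg (by omega), if_pos h]
lemma ψ_eval2 (r : ℕ) (k : Fin (2 * r + 4)) (h : k.val = 2) :
    ψ r k = s(⟨2, by omega⟩, ⟨3, by omega⟩) := by
  unfold ψ; rw [if_neg (by omega), if_neg (by omega), if_pos h]
lemma ψ_eval3 (r : ℕ) (k : Fin (2 * r + 4)) (h : k.val = 3) :
    ψ r k = s(⟨3, by omega⟩, ⟨4, by omega⟩) := by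
  unfold ψ; rw [if_neg (by omega), if_neg (by omega), if_neg (by omega), if_pos h]
lemma ψ_evalp1 (r : ℕ) (k : Fin (2 * r + 4)) (h2 : 4 ≤ k.val) (h3 : k.val ≤ r + 3) :
    ψ r k = s(⟨1, by omega⟩, ⟨k.val + 1, by have := k.isLt; omega⟩) := by
  unfold ψ
  rw [if_neg (by omega), if_neg (by omega), if_neg (by omega), if_neg (by omega), if_pos h3]
lemma ψ_evalp3 (r : ℕ) (k : Fin (2 * r + 4)) (h2 : r + 4 ≤ k.val) :
    ψ r k = s(⟨3, by omega⟩, ⟨k.val + 1, by have := k.isLt; omega⟩) := by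
  unfold ψ
  rw [if_neg (by omega), if_neg (by omega), if_neg (by omega), if_neg (by omega),
    if_neg (by omega)]

end Stmt17Aux
namespace Stmt17Aux

lemma φ₀_cases (r : ℕ) (k : Fin (2 * r + 2)) :
    ∃ x y : Fin (2 * r + 5), φ₀ r k = s(x, y) ∧ C0 r x.val y.val := by
  have hk := k.isLt
  have hc : k.val = 0 ∨ k.val = 1 ∨ (2 ≤ k.val ∧ k.val ≤ r + 1) ∨ r + 2 ≤ k.val := by omega
  rcases hc with h | h | ⟨h, h'⟩ | h
  · exact ⟨_, _, φ₀_eval0 r k h, Or.inl ⟨rfl, rfl⟩⟩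
  · exact ⟨_, _, φ₀_eval1 r k h, Or.inr (Or.inl ⟨rfl, rfl⟩)⟩
  · exact ⟨_, _, φ₀_evalp1 r k h h', Or.inr (Or.inr (Or.inl
      ⟨rfl, by simp only [Fin.val_mk]; omega, by simp only [Fin.val_mk]; omega⟩))⟩
  · exact ⟨_, _, φ₀_evalp3 r k h, Or.inr (Or.inr (Or.inr
      ⟨rfl, by simp only [Fin.val_mk]; omega, by simp only [Fin.val_mk]; omega⟩))⟩

lemma ψ_cases (r : ℕ) (k : Fin (2 * r + 4)) :
    ∃ x y : Fin (2 * r + 5), ψ r k = s(x, y) ∧ CE r x.val y.val := by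
  have hk := k.isLt
  have hc : k.val = 0 ∨ k.val = 1 ∨ k.val = 2 ∨ k.val = 3 ∨ (4 ≤ k.val ∧ k.val ≤ r + 3) ∨
      r + 4 ≤ k.val := by omega
  rcases hc with h | h | h | h | ⟨h, h'⟩ | h
  · exact ⟨_, _, ψ_eval0 r k h, CE_01 rfl rfl⟩
  · exact ⟨_, _, ψ_eval1 r k h, CE_12 rfl rfl⟩
  · exact ⟨_, _, ψ_eval2 r k h, CE_23 rfl rfl⟩
  · exact ⟨_, _, ψ_eval3 r k h, CE_34 rfl rfl⟩
  · exact ⟨_, _, ψ_evalp1 r k h h', CE_1p rfl (by simp only [Fin.val_mk]; omega)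
      (by simp only [Fin.val_mk]; omega)⟩
  · exact ⟨_, _, ψ_evalp3 r k h, CE_3p rfl (by simp only [Fin.val_mk]; omega)
      (by simp only [Fin.val_mk]; omega)⟩

lemma φ₀_inj (r : ℕ) : Function.Injective (φ₀ r) := by
  intro k1 k2 h
  have hk1 := k1.isLt
  have hk2 := k2.isLt
  unfold φ₀ at h
  split_ifs at h <;> rw [Sym2.eq_iff] at h <;>
    simp only [Fin.ext_iff, Fin.val_mk, true_and, and_true, true_or, or_true] at * <;> omega

lemma ψ_inj (r : ℕ) : Function.Injective (ψ r) := by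
  intro k1 k2 h
  have hk1 := k1.isLt
  have hk2 := k2.isLt
  unfold ψ at h
  split_ifs at h <;> rw [Sym2.eq_iff] at h <;>
    simp only [Fin.ext_iff, Fin.val_mk, true_and, and_true, true_or, or_true] at * <;> omega

lemma mem_range_φ₀ (r : ℕ) {x y : Fin (2 * r + 5)} (h : C0 r x.val y.val) :
    s(x, y) ∈ Set.range (φ₀ r) := by
  have hy := y.isLt
  unfold C0 at h
  rcases h with ⟨h1, h2⟩ | ⟨h1, h2⟩ | ⟨h1, h2, h3⟩ | ⟨h1, h2, h3⟩
  · exact ⟨⟨0, by omega⟩, by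
      rw [φ₀_eval0 r _ rfl, Sym2.eq_iff]
      simp only [Fin.ext_iff, Fin.val_mk]; omega⟩
  · exact ⟨⟨1, by omega⟩, by
      rw [φ₀_eval1 r _ rfl, Sym2.eq_iff]
      simp only [Fin.ext_iff, Fin.val_mk]; omega⟩
  · exact ⟨⟨y.val - 3, by omega⟩, by
      rw [φ₀_evalp1 r _ (by show 2 ≤ y.val - 3; omega) (by show y.val - 3 ≤ r + 1; omega),
        Sym2.eq_iff]
      simp only [Fin.ext_iff, Fin.val_mk]; omega⟩
  · exact ⟨⟨y.val - 3, by omega⟩, by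
      rw [φ₀_evalp3 r _ (by show r + 2 ≤ y.val - 3; omega), Sym2.eq_iff]
      simp only [Fin.ext_iff, Fin.val_mk]; omega⟩

lemma mem_range_ψ (r : ℕ) {x y : Fin (2 * r + 5)} (h : CE r x.val y.val) :
    s(x, y) ∈ Set.range (ψ r) := by
  have hy := y.isLt
  unfold CE C0 at h
  rcases h with (⟨h1, h2⟩ | ⟨h1, h2⟩ | ⟨h1, h2, h3⟩ | ⟨h1, h2, h3⟩) | ⟨h1, h2⟩ | ⟨h1, h2⟩
  · exact ⟨⟨0, by omega⟩, by
      rw [ψ_eval0 r _ rfl, Sym2.eq_iff]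
      simp only [Fin.ext_iff, Fin.val_mk]; omega⟩
  · exact ⟨⟨3, by omega⟩, by
      rw [ψ_eval3 r _ rfl, Sym2.eq_iff]
      simp only [Fin.ext_iff, Fin.val_mk]; omega⟩
  · exact ⟨⟨y.val - 1, by omega⟩, by
      rw [ψ_evalp1 r _ (by show 4 ≤ y.val - 1; omega) (by show y.val - 1 ≤ r + 3; omega),
        Sym2.eq_iff]
      simp only [Fin.ext_iff, Fin.val_mk]; omega⟩
  · exact ⟨⟨y.val - 1, by omega⟩, by
      rw [ψ_evalp3 r _ (by show r + 4 ≤ y.val - 1; omega), Sym2.eq_iff]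
      simp only [Fin.ext_iff, Fin.val_mk]; omega⟩
  · exact ⟨⟨1, by omega⟩, by
      rw [ψ_eval1 r _ rfl, Sym2.eq_iff]
      simp only [Fin.ext_iff, Fin.val_mk]; omega⟩
  · exact ⟨⟨2, by omega⟩, by
      rw [ψ_eval2 r _ rfl, Sym2.eq_iff]
      simp only [Fin.ext_iff, Fin.val_mk]; omega⟩

lemma mem_range_φ₁ (r : ℕ) {x y : Fin (2 * r + 5)}
    (h : (x.val = 0 ∧ y.val = 1) ∨ (x.val = 1 ∧ y.val = 2) ∨
      (x.val = 1 ∧ 5 ≤ y.val ∧ y.val ≤ r + 4)) :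
    s(x, y) ∈ Set.range (φ₁ r) := by
  rcases h with ⟨h1, h2⟩ | ⟨h1, h2⟩ | ⟨h1, h2, h3⟩
  · exact ⟨⟨0, by omega⟩, by
      rw [φ₁_eval0 r _ rfl, Sym2.eq_iff]
      simp only [Fin.ext_iff, Fin.val_mk]; omega⟩
  · exact ⟨⟨1, by omega⟩, by
      rw [φ₁_eval1 r _ rfl, Sym2.eq_iff]
      simp only [Fin.ext_iff, Fin.val_mk]; omega⟩
  · exact ⟨⟨y.val - 3, by omega⟩, by
      rw [φ₁_evalp r _ (by show 2 ≤ y.val - 3; omega), Sym2.eq_iff]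
      simp only [Fin.ext_iff, Fin.val_mk]; omega⟩

lemma mem_range_φ₃ (r : ℕ) {x y : Fin (2 * r + 5)}
    (h : (x.val = 3 ∧ y.val = 4) ∨ (x.val = 2 ∧ y.val = 3) ∨
      (x.val = 3 ∧ r + 5 ≤ y.val ∧ y.val ≤ 2 * r + 4)) :
    s(x, y) ∈ Set.range (φ₃ r) := by
  rcases h with ⟨h1, h2⟩ | ⟨h1, h2⟩ | ⟨h1, h2, h3⟩
  · exact ⟨⟨0, by omega⟩, by
      rw [φ₃_eval0 r _ rfl, Sym2.eq_iff]
      simp only [Fin.ext_iff, Fin.val_mk]; omega⟩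
  · exact ⟨⟨1, by omega⟩, by
      rw [φ₃_eval1 r _ rfl, Sym2.eq_iff]
      simp only [Fin.ext_iff, Fin.val_mk]; omega⟩
  · exact ⟨⟨y.val - r - 3, by omega⟩, by
      rw [φ₃_evalp r _ (by show 2 ≤ y.val - r - 3; omega), Sym2.eq_iff]
      simp only [Fin.ext_iff, Fin.val_mk]; omega⟩

lemma edgeSet_eq (r : ℕ) : (Gr r).edgeSet = Set.range (ψ r) := by
  ext e
  constructor
  · intro he
    obtain ⟨x, y, rfl, hce⟩ := edge_repCE he
    exact mem_range_ψ r hce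
  · rintro ⟨k, rfl⟩
    obtain ⟨x, y, hk, hce⟩ := ψ_cases r k
    rw [hk]
    exact mem_edgeSet_of_CE hce

lemma ncard_range_le {α β : Type*} [Fintype α] (f : α → β) :
    (Set.range f).ncard ≤ Fintype.card α := by
  rw [← Set.image_univ]
  refine le_trans (Set.ncard_image_le (Set.toFinite _)) ?_
  simp [Set.ncard_univ, Nat.card_eq_fintype_card]

lemma ncard_range_eq {α β : Type*} [Fintype α] (f : α → β) (hf : Function.Injective f) :
    (Set.range f).ncard = Fintype.card α := by
  rw [← Set.image_univ, Set.ncard_image_of_injective _ hf, Set.ncard_univ,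
    Nat.card_eq_fintype_card]

end Stmt17Aux
namespace Stmt17Aux

lemma mem_left_of_val {n : ℕ} {v x y : Fin n} (h : v.val = x.val) : v ∈ s(x, y) :=
  Sym2.mem_iff.mpr (Or.inl (Fin.ext h))

lemma mem_right_of_val {n : ℕ} {v x y : Fin n} (h : v.val = y.val) : v ∈ s(x, y) :=
  Sym2.mem_iff.mpr (Or.inr (Fin.ext h))

lemma support_mem {r : ℕ} {e : Sym2 (Fin (2 * r + 5))} (he : e ∈ (Gr r).edgeSet) :
    (⟨1, by omega⟩ : Fin (2 * r + 5)) ∈ e ∨ (⟨3, by omega⟩ : Fin (2 * r + 5)) ∈ e := by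
  obtain ⟨x, y, rfl, hce⟩ := edge_repCE he
  unfold CE C0 at hce
  have h : x.val = 1 ∨ y.val = 1 ∨ x.val = 3 ∨ y.val = 3 := by omega
  rcases h with h | h | h | h
  · exact Or.inl (mem_left_of_val (by simp only [Fin.val_mk]; omega))
  · exact Or.inl (mem_right_of_val (by simp only [Fin.val_mk]; omega))
  · exact Or.inr (mem_left_of_val (by simp only [Fin.val_mk]; omega))
  · exact Or.inr (mem_right_of_val (by simp only [Fin.val_mk]; omega))

lemma m12_ne_m23 (r : ℕ) : m12 r ≠ m23 r := by
  intro h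
  unfold m12 m23 at h
  rw [Sym2.eq_iff] at h
  simp only [Fin.ext_iff, Fin.val_mk] at h
  omega

lemma no1 (r : ℕ) (D : Set (Sym2 (Fin (2 * r + 5)))) (hD : (Gr r).IsEOPSet D)
    (h23 : m23 r ∈ D) {e : Sym2 (Fin (2 * r + 5))} (heD : e ∈ D)
    (h1e : (⟨1, by omega⟩ : Fin (2 * r + 5)) ∈ e) (hne : e ≠ m12 r) : False := by
  have hne23 : e ≠ m23 r := by
    rintro rfl
    rcases Sym2.mem_iff.mp h1e with h | h <;>
      (have h' := congrArg Fin.val h; simp only [Fin.val_mk] at h'; omega)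
  apply hD.2 e heD (m23 r) h23 hne23 (m12 r)
  exact ⟨mem_edgeSet_of_CE (CE_12 rfl rfl), Ne.symm hne, m12_ne_m23 r,
    ⟨1, by omega⟩, ⟨2, by omega⟩, rfl, h1e, mem_left_of_val rfl⟩

lemma no3 (r : ℕ) (D : Set (Sym2 (Fin (2 * r + 5)))) (hD : (Gr r).IsEOPSet D)
    (h12 : m12 r ∈ D) {e : Sym2 (Fin (2 * r + 5))} (heD : e ∈ D)
    (h3e : (⟨3, by omega⟩ : Fin (2 * r + 5)) ∈ e) (hne : e ≠ m23 r) : False := by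
  have hne12 : e ≠ m12 r := by
    rintro rfl
    rcases Sym2.mem_iff.mp h3e with h | h <;>
      (have h' := congrArg Fin.val h; simp only [Fin.val_mk] at h'; omega)
  apply hD.2 e heD (m12 r) h12 hne12 (m23 r)
  refine ⟨mem_edgeSet_of_CE (CE_23 rfl rfl), Ne.symm hne, (m12_ne_m23 r).symm,
    ⟨3, by omega⟩, ⟨2, by omega⟩, Sym2.eq_swap, h3e, mem_right_of_val rfl⟩

lemma C0_notmid (r x y : ℕ) (h : C0 r x y) : ¬ pairP x y 1 2 ∧ ¬ pairP x y 2 3 := by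
  unfold C0 pairP at *
  omega

lemma eop_φ₀ (r : ℕ) : (Gr r).IsEOPSet (Set.range (φ₀ r)) := by
  constructor
  · rintro e ⟨k, rfl⟩
    obtain ⟨x, y, hk, hc⟩ := φ₀_cases r k
    rw [hk]
    exact mem_edgeSet_of_CE (Or.inl hc)
  · rintro e₁ ⟨k1, rfl⟩ e₂ ⟨k2, rfl⟩ hne e hce
    obtain ⟨x1, y1, hk1, hc1⟩ := φ₀_cases r k1
    obtain ⟨x2, y2, hk2, hc2⟩ := φ₀_cases r k2
    rw [hk1, hk2] at hce
    obtain ⟨heE, hne1, hne2, a, b, rfl, ha, hb⟩ := hce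
    have hA : A r a.val b.val := adj_val.mp ((Gr r).mem_edgeSet.mp heE)
    have hA1 : A r x1.val y1.val := CE_A _ _ _ x1.isLt y1.isLt (Or.inl hc1)
    have hA2 : A r x2.val y2.val := CE_A _ _ _ x2.isLt y2.isLt (Or.inl hc2)
    obtain ⟨nm1, nm1'⟩ := C0_notmid r x1.val y1.val hc1
    obtain ⟨nm2, nm2'⟩ := C0_notmid r x2.val y2.val hc2
    exact coreFinal r x1.val y1.val x2.val y2.val a.val b.val hA1 nm1 nm1' hA2 nm2 nm2' hA
      (npair_of_ne hne1) (npair_of_ne hne2) (mem_or ha) (mem_or hb)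

set_option maxHeartbeats 2000000 in
lemma upper (r : ℕ) (D : Set (Sym2 (Fin (2 * r + 5)))) (hD : (Gr r).IsEOPSet D) :
    D.ncard ≤ 2 * r + 2 := by
  by_cases h12 : m12 r ∈ D <;> by_cases h23 : m23 r ∈ D
  · -- both middle edges in D : D ⊆ {m12, m23}
    have hsub : D ⊆ {m12 r, m23 r} := by
      intro e heD
      by_contra hc
      simp only [Set.mem_insert_iff, Set.mem_singleton_iff] at hc
      push_neg at hc
      rcases support_mem (hD.1 heD) with h | h
      · exact no1 r D hD h23 heD h hc.1
      · exact no3 r D hD h12 heD h hc.2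
    calc D.ncard ≤ ({m12 r, m23 r} : Set (Sym2 (Fin (2 * r + 5)))).ncard :=
          Set.ncard_le_ncard hsub (Set.toFinite _)
      _ ≤ 2 := le_trans (Set.ncard_insert_le _ _) (by simp)
      _ ≤ 2 * r + 2 := by omega
  · -- m12 ∈ D, m23 ∉ D : D ⊆ range φ₁
    have hsub : D ⊆ Set.range (φ₁ r) := by
      intro e heD
      have hne23 : e ≠ m23 r := fun h => h23 (h ▸ heD)
      obtain ⟨x, y, rfl, hce⟩ := edge_repCE (hD.1 heD)
      by_cases h3 : x.val = 3 ∨ y.val = 3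
      · exfalso
        have h3e : (⟨3, by omega⟩ : Fin (2 * r + 5)) ∈ s(x, y) := by
          rcases h3 with h | h
          · exact mem_left_of_val (by simp only [Fin.val_mk]; omega)
          · exact mem_right_of_val (by simp only [Fin.val_mk]; omega)
        exact no3 r D hD h12 heD h3e hne23
      · push_neg at h3
        apply mem_range_φ₁ r
        unfold CE C0 at hce
        omega
    calc D.ncard ≤ (Set.range (φ₁ r)).ncard := Set.ncard_le_ncard hsub (Set.toFinite _)
      _ ≤ r + 2 := le_trans (ncard_range_le _) (by simp)
      _ ≤ 2 * r + 2 := by omega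
  · -- m12 ∉ D, m23 ∈ D : D ⊆ range φ₃
    have hsub : D ⊆ Set.range (φ₃ r) := by
      intro e heD
      have hne12 : e ≠ m12 r := fun h => h12 (h ▸ heD)
      obtain ⟨x, y, rfl, hce⟩ := edge_repCE (hD.1 heD)
      by_cases h1 : x.val = 1 ∨ y.val = 1
      · exfalso
        have h1e : (⟨1, by omega⟩ : Fin (2 * r + 5)) ∈ s(x, y) := by
          rcases h1 with h | h
          · exact mem_left_of_val (by simp only [Fin.val_mk]; omega)
          · exact mem_right_of_val (by simp only [Fin.val_mk]; omega)
        exact no1 r D hD h23 heD h1e hne12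
      · push_neg at h1
        apply mem_range_φ₃ r
        unfold CE C0 at hce
        omega
    calc D.ncard ≤ (Set.range (φ₃ r)).ncard := Set.ncard_le_ncard hsub (Set.toFinite _)
      _ ≤ r + 2 := le_trans (ncard_range_le _) (by simp)
      _ ≤ 2 * r + 2 := by omega
  · -- neither middle edge in D : D ⊆ range φ₀
    have hsub : D ⊆ Set.range (φ₀ r) := by
      intro e heD
      have hne12 : e ≠ m12 r := fun h => h12 (h ▸ heD)
      have hne23 : e ≠ m23 r := fun h => h23 (h ▸ heD)
      obtain ⟨x, y, rfl, hce⟩ := edge_repCE (hD.1 heD)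
      apply mem_range_φ₀ r
      have p12 := npair_of_ne (show s(x, y) ≠
        s((⟨1, by omega⟩ : Fin (2 * r + 5)), ⟨2, by omega⟩) from hne12)
      have p23 := npair_of_ne (show s(x, y) ≠
        s((⟨2, by omega⟩ : Fin (2 * r + 5)), ⟨3, by omega⟩) from hne23)
      simp only [Fin.val_mk] at p12 p23
      unfold CE C0 at hce
      unfold pairP at p12 p23
      unfold C0
      omega
    calc D.ncard ≤ (Set.range (φ₀ r)).ncard := Set.ncard_le_ncard hsub (Set.toFinite _)
      _ ≤ 2 * r + 2 := le_trans (ncard_range_le _) (by simp)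

end Stmt17Aux

open Stmt17Aux in
theorem stmt17 (r : ℕ) (G : SimpleGraph (Fin (2 * r + 5)))
    (hG : G = SimpleGraph.fromRel (fun x y =>
      (x.val < 4 ∧ y.val = x.val + 1) ∨
      (x.val = 1 ∧ 5 ≤ y.val ∧ y.val ≤ r + 4) ∨
      (x.val = 3 ∧ r + 5 ≤ y.val))) :
    G.eopNum = G.edgeSet.ncard - 2 := by
  subst hG
  show (Gr r).eopNum = (Gr r).edgeSet.ncard - 2
  have hcard : (Gr r).edgeSet.ncard = 2 * r + 4 := by
    rw [edgeSet_eq r, ncard_range_eq _ (ψ_inj r), Fintype.card_fin]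
  rw [hcard]
  have hmem : 2 * r + 2 ∈ {n | ∃ D : Set (Sym2 (Fin (2 * r + 5))),
      (Gr r).IsEOPSet D ∧ D.ncard = n} :=
    ⟨Set.range (φ₀ r), eop_φ₀ r, by
      rw [ncard_range_eq _ (φ₀_inj r), Fintype.card_fin]⟩
  have hub : ∀ n ∈ {n | ∃ D : Set (Sym2 (Fin (2 * r + 5))),
      (Gr r).IsEOPSet D ∧ D.ncard = n}, n ≤ 2 * r + 2 := by
    rintro n ⟨D, hDe, rfl⟩
    exact upper r D hDe
  unfold SimpleGraph.eopNum
  have h1 : sSup {n | ∃ D : Set (Sym2 (Fin (2 * r + 5))),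
      (Gr r).IsEOPSet D ∧ D.ncard = n} ≤ 2 * r + 2 := csSup_le ⟨_, hmem⟩ hub
  have h2 : 2 * r + 2 ≤ sSup {n | ∃ D : Set (Sym2 (Fin (2 * r + 5))),
      (Gr r).IsEOPSet D ∧ D.ncard = n} := le_csSup ⟨2 * r + 2, hub⟩ hmem
  omega
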